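/- arXiv:1501.05795 — 3 statements merged into one kernel-verified Lean document; each statement's English description precedes it below -/
import Mathlib

section
/- Let Δ ≥ 0 and n > 0 be real. The function f(Δ) = (2/9)(2n² − 3Δ + 2√(n⁴ + 6n²Δ)) attains its maximum value n² at Δ = n²/2; in particular f(Δ) ≤ n² for all Δ ≥ 0. -/
theorem stmt_3 (n : ℝ) (hn : 0 < n) :
    (∀ Δ : ℝ, 0 ≤ Δ →
      (2 / 9) * (2 * n ^ 2 - 3 * Δ + 2 * Real.sqrt (n ^ 4 + 6 * n ^ 2 * Δ)) ≤ n ^ 2) ∧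
    (2 / 9) * (2 * n ^ 2 - 3 * (n ^ 2 / 2)
      + 2 * Real.sqrt (n ^ 4 + 6 * n ^ 2 * (n ^ 2 / 2))) = n ^ 2 := by
  constructor
  · intro Δ hΔ
    have hX : (0:ℝ) ≤ n ^ 4 + 6 * n ^ 2 * Δ := by positivity
    have hs : Real.sqrt (n ^ 4 + 6 * n ^ 2 * Δ) ≤ (5 * n ^ 2 + 6 * Δ) / 4 := by
      rw [show n ^ 4 + 6 * n ^ 2 * Δ = ((5 * n ^ 2 + 6 * Δ) / 4) ^ 2 - (3 * (n ^ 2 - 2 * Δ) / 4) ^ 2 by ring]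
      calc Real.sqrt (((5 * n ^ 2 + 6 * Δ) / 4) ^ 2 - (3 * (n ^ 2 - 2 * Δ) / 4) ^ 2)
          ≤ Real.sqrt (((5 * n ^ 2 + 6 * Δ) / 4) ^ 2) := by
            apply Real.sqrt_le_sqrt; nlinarith [sq_nonneg (3 * (n ^ 2 - 2 * Δ) / 4)]
        _ = (5 * n ^ 2 + 6 * Δ) / 4 := Real.sqrt_sq (by positivity)
    nlinarith [hs]
  · have : n ^ 4 + 6 * n ^ 2 * (n ^ 2 / 2) = (2 * n ^ 2) ^ 2 := by ring
    rw [this, Real.sqrt_sq (by positivity)]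
    ring
end

section
/- Let n > 0, Δ > 0, b > n² be real, set a = −(b+Δ), and let D = 16an² + 4a² + 8bn² − 4ab + b². Then D ≥ 0, and the roots η₁ = (−2n² − 2a − b − √D)/2 and η₂ = (−2n² − 2a − b + √D)/2 satisfy η₁ < 0 < η₂. -/
theorem stmt_5 (n Δ b : ℝ) (hn : 0 < n) (hΔ : 0 < Δ) (hb : b > n ^ 2) :
    let a := -(b + Δ)
    let D := 16 * a * n ^ 2 + 4 * a ^ 2 + 8 * b * n ^ 2 - 4 * a * b + b ^ 2
    D ≥ 0 ∧
    (-2 * n ^ 2 - 2 * a - b - Real.sqrt D) / 2 < 0 ∧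
    0 < (-2 * n ^ 2 - 2 * a - b + Real.sqrt D) / 2 := by
  intro a D
  set S : ℝ := 2 * n ^ 2 + 2 * a + b with hS
  have hkey : D = S ^ 2 + 4 * (n ^ 2 + 2 * b + 2 * Δ) * (b - n ^ 2) := by
    simp only [hS, a, D]; ring
  have hpos1 : 0 < n ^ 2 + 2 * b + 2 * Δ := by nlinarith [sq_nonneg n]
  have hpos2 : 0 < b - n ^ 2 := by linarith
  have hSD : S ^ 2 < D := by nlinarith
  have hDnn : 0 ≤ D := by nlinarith [sq_nonneg S]
  have habs : |S| < Real.sqrt D := by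
    rw [show (Real.sqrt D) = Real.sqrt D from rfl]
    have := (Real.lt_sqrt (abs_nonneg S)).2 (by rwa [sq_abs])
    exact this
  have h1 : S < Real.sqrt D := lt_of_le_of_lt (le_abs_self S) habs
  have h2 : -S < Real.sqrt D := lt_of_le_of_lt (neg_le_abs S) habs
  refine ⟨hDnn, ?_, ?_⟩
  · have : -2 * n ^ 2 - 2 * a - b = -S := by rw [hS]; ring
    rw [this]; linarith
  · have : -2 * n ^ 2 - 2 * a - b = -S := by rw [hS]; ring
    rw [this]; linarith
end

section
/- Let λ ∈ ℂ, n ∈ ℝ, and let M be the 4×4 matrix with rows (0, n, 1, 0), (−n, 0, 0, 1), (−2a, 0, 0, n), (0, −b, −n, 0). If λ is an eigenvalue of M, then the vector (2nλ, λ² + 2a − n², nλ² − 2an + n³, λ³ + (2a + n²)λ)ᵀ lies in the kernel of M − λI₄ (and is an eigenvector whenever it is nonzero). -/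
/-!
The vector `v(λ)` is the last column of the adjugate of `λ I - M`, so
`(M - λ I) v(λ) = -χ_M(λ) e₄` holds identically in `λ`, over any commutative ring;
at an eigenvalue the right-hand side vanishes.
-/

open Matrix Polynomial

variable {R : Type*} [CommRing R]

def collinearMatrix (n a b : R) : Matrix (Fin 4) (Fin 4) R :=
  !![0, n, 1, 0;
     -n, 0, 0, 1;
     -2 * a, 0, 0, n;
     0, -b, -n, 0]

def collinearKernelVector (n a lam : R) : Fin 4 → R :=
  ![2 * n * lam,
    lam ^ 2 + 2 * a - n ^ 2,
    n * lam ^ 2 - 2 * a * n + n ^ 3,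
    lam ^ 3 + (2 * a + n ^ 2) * lam]

theorem eval_charpoly_collinearMatrix (n a b lam : R) :
    (collinearMatrix n a b).charpoly.eval lam =
      lam ^ 4 + (2 * a + b + 2 * n ^ 2) * lam ^ 2
        + (n ^ 4 - 2 * a * n ^ 2 - b * n ^ 2 + 2 * a * b) := by
  rw [eval_charpoly]
  simp [collinearMatrix, det_succ_row_zero, Fin.sum_univ_succ, Fin.succAbove]
  ring

theorem collinearMatrix_sub_smul_mulVec_collinearKernelVector (n a b lam : R) :
    (collinearMatrix n a b - lam • 1) *ᵥ collinearKernelVector n a lam =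
      Pi.single 3 (-(collinearMatrix n a b).charpoly.eval lam) := by
  rw [eval_charpoly_collinearMatrix]
  ext i
  fin_cases i <;>
    simp [collinearMatrix, collinearKernelVector, mulVec, dotProduct, Fin.sum_univ_four,
      one_apply] <;>
    ring

theorem stmt_14 (n a b : ℝ) (lam : ℂ)
    (M : Matrix (Fin 4) (Fin 4) ℂ)
    (hM : M = !![0, (n : ℂ), 1, 0;
                 -(n : ℂ), 0, 0, 1;
                 -2 * (a : ℂ), 0, 0, (n : ℂ);
                 0, -(b : ℂ), -(n : ℂ), 0])
    (hlam : (Matrix.charpoly M).IsRoot lam) :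
    (M - lam • (1 : Matrix (Fin 4) (Fin 4) ℂ)).mulVec
      ![2 * n * lam,
        lam ^ 2 + 2 * a - n ^ 2,
        n * lam ^ 2 - 2 * a * n + n ^ 3,
        lam ^ 3 + (2 * a + n ^ 2) * lam] = 0 := by
  have hM' : M = collinearMatrix (n : ℂ) a b := hM
  have hker := collinearMatrix_sub_smul_mulVec_collinearKernelVector (n : ℂ) a b lam
  rw [← hM', hlam.eq_zero, neg_zero, Pi.single_zero] at hker
  exact hker
end
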